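/- In a well-structured transition system with a decidable WQO and effectively computable predecessor bases, the backward-reachability sequence U₀ = U, U_{k+1} = U_k ∪ Pred(U_k) stabilizes after finitely many steps: there exists k such that U_{k+1} = U_k. -/

import Mathlib

/-!
If the chain `U₀ ⊆ U₁ ⊆ ⋯` grew at every step, choosing `q k ∈ U (k+1) \ U k` would give a
sequence in which the well-quasi-order finds `i < j` with `q i ≾ q j`; but `q i ∈ U (i+1) ⊆ U j`
and `U j` is upwards closed, so `q j ∈ U j`, a contradiction.
-/

def UpClosed {Q : Type*} (le : Q → Q → Prop) (V : Set Q) : Prop :=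
  ∀ q p, q ∈ V → le q p → p ∈ V

theorem WellQuasiOrdered.exists_succ_eq_of_monotone {Q : Type*} {le : Q → Q → Prop}
    (hwqo : WellQuasiOrdered le) {U : ℕ → Set Q} (hmono : Monotone U)
    (hup : ∀ k, UpClosed le (U k)) : ∃ k, U (k + 1) = U k := by
  by_contra! hgrow
  have hnew : ∀ k, ∃ q, q ∈ U (k + 1) ∧ q ∉ U k := fun k =>
    Set.not_subset.mp fun hsub => hgrow k (hsub.antisymm (hmono k.le_succ))
  choose q hq_mem hq_new using hnew
  obtain ⟨i, j, hij, hle⟩ := hwqo q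
  exact hq_new j (hup j (q i) (q j) (hmono hij (hq_mem i)) hle)

theorem backward_reachability_stabilizes_general {Q : Type}
    (step : Q → Q → Prop) (le : Q → Q → Prop)
    (hwqo : ∀ f : ℕ → Q, ∃ i j, i < j ∧ le (f i) (f j))
    (U : ℕ → Set Q)
    (hU0 : ∀ q p, q ∈ U 0 → le q p → p ∈ U 0)
    (hclosed : ∀ V : Set Q, (∀ q p, q ∈ V → le q p → p ∈ V) →
      ∀ q p, q ∈ V ∪ {x | ∃ u ∈ V, step x u} → le q p →
        p ∈ V ∪ {x | ∃ u ∈ V, step x u})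
    (hsucc : ∀ k, U (k + 1) = U k ∪ {x | ∃ u ∈ U k, step x u}) :
    ∃ k, U (k + 1) = U k := by
  have hmono : Monotone U :=
    monotone_nat_of_le_succ fun k => (hsucc k).symm ▸ Set.subset_union_left
  have hup : ∀ k, UpClosed le (U k) := by
    intro k
    induction k with
    | zero => exact hU0
    | succ k ih => rw [UpClosed, hsucc k]; exact hclosed (U k) ih
  exact WellQuasiOrdered.exists_succ_eq_of_monotone hwqo hmono hup

/-- The backward-reachability sequence `U₀ = U`, `U_{k+1} = U_k ∪ Pred(U_k)`
of upwards-closed sets in a well-structured transition system stabilizes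
after finitely many steps. -/
theorem backward_reachability_stabilizes {Q : Type}
    (step : Q → Q → Prop) (le : Q → Q → Prop)
    (hrefl : Reflexive le) (htrans : Transitive le)
    (hwqo : ∀ f : ℕ → Q, ∃ i j, i < j ∧ le (f i) (f j))
    (U : ℕ → Set Q)
    (hU0 : ∀ q p, q ∈ U 0 → le q p → p ∈ U 0)
    (hclosed : ∀ V : Set Q, (∀ q p, q ∈ V → le q p → p ∈ V) →
      ∀ q p, q ∈ V ∪ {x | ∃ u ∈ V, step x u} → le q p →
        p ∈ V ∪ {x | ∃ u ∈ V, step x u})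
    (hsucc : ∀ k, U (k + 1) = U k ∪ {x | ∃ u ∈ U k, step x u}) :
    ∃ k, U (k + 1) = U k :=
  backward_reachability_stabilizes_general step le hwqo U hU0 hclosed hsucc
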